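/- arXiv:cs/0502016 — 5 statements merged into one kernel-verified Lean document; each statement's English description precedes it below -/
import Mathlib

section
/- Let H be a real Hilbert space, X a measurable space, K : X → H a map, and μ a finite measure on X × ℝ. Fix λ > 0 and define L(f) = ∫ (⟪f, K x⟫ − y)² dμ(x, y) + λ‖f‖² for f ∈ H, assuming the integrand is μ-integrable for every f ∈ H. If f̂ ∈ H is a minimizer of L over H, then for every f ∈ H one has L(f) = L(f̂) + ∫ ⟪f − f̂, K x⟫² dμ(x, y) + λ‖f − f̂‖²; in particular L(f) − L(f̂) ≥ λ‖f − f̂‖². -/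
/-!
Restricted to the line `t ↦ f̂ + t • (f - f̂)`, the regularized loss is a real quadratic
`L f̂ + t * b + t ^ 2 * q` with leading coefficient `q = ∫ ⟪f - f̂, K x⟫² dμ + λ‖f - f̂‖²`.
Minimality of `f̂` says that `t * b + t ^ 2 * q ≥ 0` for all `t`, i.e. `t = 0` is a minimum, so
the derivative `b` there vanishes; evaluating at `t = 1` gives the identity.
-/

open MeasureTheory

theorem eq_zero_of_forall_mul_add_sq_mul_nonneg {b q : ℝ} (h : ∀ t : ℝ, 0 ≤ t * b + t ^ 2 * q) :
    b = 0 := by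
  have hderiv : HasDerivAt (fun t : ℝ => t * b + t ^ 2 * q) b 0 := by
    simpa using ((hasDerivAt_id' (0 : ℝ)).mul_const b).fun_add
      ((hasDerivAt_pow 2 (0 : ℝ)).mul_const q)
  refine IsLocalMin.hasDerivAt_eq_zero (Filter.Eventually.of_forall fun t => ?_) hderiv
  simpa using h t

section SquareAlongLine

variable {α : Type*} [MeasurableSpace α] {μ : Measure α} {u v : α → ℝ}

/- Measurability of `u` and `v` is not assumed, so `v²` and `u v` are written as combinations of
the squares `(u + t v)²`: `v² = 2 (u + v)² + 2 u² - 4 (u + v / 2)²` and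
`2 u v = (u + v)² - u² - v²`. -/
theorem integrable_sq_of_forall_integrable_sq_add_mul
    (h : ∀ t : ℝ, Integrable (fun x => (u x + t * v x) ^ 2) μ) :
    Integrable (fun x => v x ^ 2) μ := by
  refine ((((h 1).const_mul 2).add ((h 0).const_mul 2)).sub ((h 2⁻¹).const_mul 4)).congr ?_
  filter_upwards with x
  simp only [Pi.add_apply, Pi.sub_apply]
  ring

theorem integrable_mul_of_forall_integrable_sq_add_mul
    (h : ∀ t : ℝ, Integrable (fun x => (u x + t * v x) ^ 2) μ) :
    Integrable (fun x => u x * v x) μ := by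
  refine ((((h 1).sub (h 0)).sub (integrable_sq_of_forall_integrable_sq_add_mul h)).const_mul
    2⁻¹).congr ?_
  filter_upwards with x
  simp only [Pi.sub_apply]
  ring

theorem integral_sq_add_mul (h : ∀ t : ℝ, Integrable (fun x => (u x + t * v x) ^ 2) μ) (t : ℝ) :
    ∫ x, (u x + t * v x) ^ 2 ∂μ
      = ∫ x, u x ^ 2 ∂μ + t * (2 * ∫ x, u x * v x ∂μ) + t ^ 2 * ∫ x, v x ^ 2 ∂μ := by
  have hu : Integrable (fun x => u x ^ 2) μ := by simpa using h 0
  have huv := (integrable_mul_of_forall_integrable_sq_add_mul h).const_mul (t * 2)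
  have hv := (integrable_sq_of_forall_integrable_sq_add_mul h).const_mul (t ^ 2)
  calc ∫ x, (u x + t * v x) ^ 2 ∂μ
      = ∫ x, u x ^ 2 + t * 2 * (u x * v x) + t ^ 2 * v x ^ 2 ∂μ := by
        congr 1; ext x; ring
    _ = _ := by
        rw [integral_add (hu.fun_add huv) hv, integral_add hu huv, integral_const_mul,
          integral_const_mul]
        ring

end SquareAlongLine

theorem norm_add_smul_sq {H : Type*} [NormedAddCommGroup H] [InnerProductSpace ℝ H]
    (f g : H) (t : ℝ) :
    ‖f + t • g‖ ^ 2 = ‖f‖ ^ 2 + t * (2 * inner ℝ f g) + t ^ 2 * ‖g‖ ^ 2 := by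
  rw [norm_add_sq_real, real_inner_smul_right, norm_smul, mul_pow, Real.norm_eq_abs, sq_abs]
  ring

theorem integral_sq_inner_add_smul_sub {H X : Type*} [NormedAddCommGroup H]
    [InnerProductSpace ℝ H] [MeasurableSpace X] (K : X → H) (μ : Measure (X × ℝ))
    (hint : ∀ f : H, Integrable (fun p : X × ℝ => ((inner ℝ f (K p.1) : ℝ) - p.2) ^ 2) μ)
    (f g : H) (t : ℝ) :
    ∫ p : X × ℝ, ((inner ℝ (f + t • g) (K p.1) : ℝ) - p.2) ^ 2 ∂μ
      = ∫ p : X × ℝ, ((inner ℝ f (K p.1) : ℝ) - p.2) ^ 2 ∂μ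
        + t * (2 * ∫ p : X × ℝ, ((inner ℝ f (K p.1) : ℝ) - p.2) * inner ℝ g (K p.1) ∂μ)
        + t ^ 2 * ∫ p : X × ℝ, (inner ℝ g (K p.1) : ℝ) ^ 2 ∂μ := by
  have hline : ∀ s : ℝ, (fun p : X × ℝ => ((inner ℝ (f + s • g) (K p.1) : ℝ) - p.2) ^ 2)
      = fun p => ((inner ℝ f (K p.1) : ℝ) - p.2 + s * inner ℝ g (K p.1)) ^ 2 := by
    intro s; ext p
    rw [inner_add_left, real_inner_smul_left]
    ring
  rw [hline t]
  exact integral_sq_add_mul (fun s => hline s ▸ hint (f + s • g)) t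

theorem stmt_2_general {H X : Type*} [NormedAddCommGroup H] [InnerProductSpace ℝ H]
    [MeasurableSpace X]
    (K : X → H) (μ : Measure (X × ℝ))
    (lam : ℝ)
    (L : H → ℝ)
    (hL : ∀ f : H, L f = ∫ p : X × ℝ, ((inner ℝ f (K p.1) : ℝ) - p.2) ^ 2 ∂μ + lam * ‖f‖ ^ 2)
    (hint : ∀ f : H, Integrable (fun p : X × ℝ => ((inner ℝ f (K p.1) : ℝ) - p.2) ^ 2) μ)
    (fhat : H) (hmin : ∀ f : H, L fhat ≤ L f) :
    (∀ f : H, L f = L fhat + ∫ p : X × ℝ, (inner ℝ (f - fhat) (K p.1) : ℝ) ^ 2 ∂μ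
        + lam * ‖f - fhat‖ ^ 2) ∧
    (∀ f : H, lam * ‖f - fhat‖ ^ 2 ≤ L f - L fhat) := by
  have expansion : ∀ f : H, L f = L fhat + ∫ p : X × ℝ, (inner ℝ (f - fhat) (K p.1) : ℝ) ^ 2 ∂μ
      + lam * ‖f - fhat‖ ^ 2 := by
    intro f
    set g := f - fhat
    set b := 2 * ∫ p : X × ℝ, ((inner ℝ fhat (K p.1) : ℝ) - p.2) * inner ℝ g (K p.1) ∂μ
      + lam * (2 * inner ℝ fhat g)
    set q := ∫ p : X × ℝ, (inner ℝ g (K p.1) : ℝ) ^ 2 ∂μ + lam * ‖g‖ ^ 2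
    have hquad : ∀ t : ℝ, L (fhat + t • g) = L fhat + t * b + t ^ 2 * q := by
      intro t
      rw [hL, hL fhat, integral_sq_inner_add_smul_sub K μ hint, norm_add_smul_sq]
      ring
    have hb : b = 0 := eq_zero_of_forall_mul_add_sq_mul_nonneg (q := q) fun t => by
      linarith [hquad t, hmin (fhat + t • g)]
    have h1 := hquad 1
    rw [one_smul, add_sub_cancel] at h1
    rw [h1, hb]
    ring
  refine ⟨expansion, fun f => ?_⟩
  have hsq : 0 ≤ ∫ p : X × ℝ, (inner ℝ (f - fhat) (K p.1) : ℝ) ^ 2 ∂μ :=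
    integral_nonneg fun p => sq_nonneg _
  linarith [expansion f]

theorem stmt_2 {H X : Type*} [NormedAddCommGroup H] [InnerProductSpace ℝ H] [CompleteSpace H]
    [MeasurableSpace X]
    (K : X → H) (μ : Measure (X × ℝ)) [IsFiniteMeasure μ]
    (lam : ℝ) (hlam : 0 < lam)
    (L : H → ℝ)
    (hL : ∀ f : H, L f = ∫ p : X × ℝ, ((inner ℝ f (K p.1) : ℝ) - p.2) ^ 2 ∂μ + lam * ‖f‖ ^ 2)
    (hint : ∀ f : H, Integrable (fun p : X × ℝ => ((inner ℝ f (K p.1) : ℝ) - p.2) ^ 2) μ)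
    (fhat : H) (hmin : ∀ f : H, L fhat ≤ L f) :
    (∀ f : H, L f = L fhat + ∫ p : X × ℝ, (inner ℝ (f - fhat) (K p.1) : ℝ) ^ 2 ∂μ
        + lam * ‖f - fhat‖ ^ 2) ∧
    (∀ f : H, lam * ‖f - fhat‖ ^ 2 ≤ L f - L fhat) :=
  stmt_2_general K μ lam L hL hint fhat hmin
end

section
/- Let H be a real Hilbert space, X a measurable space, μ a measure on X, and K : X → H a strongly measurable map with ∫ ‖K x‖² dμ(x) < ∞; define T f = ∫ ⟪K x, f⟫ K x dμ(x). Fix λ > 0 and g ∈ H, and define J(f) = ∫ ⟪f − g, K x⟫² dμ(x) + λ‖f‖². Then f̂ ∈ H is a minimizer of J over H if and only if T(f̂ − g) + λ f̂ = 0, i.e., (T + λ·Id) f̂ = T g; in that case f̂ − g = −λ (T + λ·Id)⁻¹ g. -/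
/-!
Writing `T` for the (positive, symmetric) integral operator, `J f = ⟪T (f - g), f - g⟫ + λ‖f‖²`,
so along a line `J (f + t h) = J f + 2t ⟪T (f - g) + λ f, h⟫ + t² (⟪T h, h⟫ + λ‖h‖²)` with a
nonnegative quadratic coefficient. Hence `f` is a minimizer iff the linear coefficient vanishes for
all `h`, i.e. `T (f - g) + λ f = 0`. Uniqueness of the solution of `(T + λ) u = -λ g` follows from
`⟪(T + λ) d, d⟫ ≥ λ‖d‖²`.
-/

open MeasureTheory

section Tikhonov

variable {E : Type*} [NormedAddCommGroup E] [InnerProductSpace ℝ E] {T : E →ₗ[ℝ] E} {lam : ℝ}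

noncomputable def tikhonovFunctional (T : E →ₗ[ℝ] E) (lam : ℝ) (g f : E) : ℝ :=
  inner ℝ (T (f - g)) (f - g) + lam * ‖f‖ ^ 2

theorem tikhonovFunctional_add_smul (hT : T.IsSymmetric) (g f h : E) (t : ℝ) :
    tikhonovFunctional T lam g (f + t • h) = tikhonovFunctional T lam g f
      + 2 * t * inner ℝ (T (f - g) + lam • f) h
      + t ^ 2 * (inner ℝ (T h) h + lam * ‖h‖ ^ 2) := by
  have hsymm : inner ℝ (T h) (f - g) = inner ℝ (T (f - g)) h := by
    rw [hT, real_inner_comm]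
  rw [tikhonovFunctional, tikhonovFunctional, add_sub_right_comm, map_add, map_smul,
    norm_add_sq_real, norm_smul, Real.norm_eq_abs, mul_pow, sq_abs]
  simp only [inner_add_left, inner_add_right, real_inner_smul_left, real_inner_smul_right, hsymm]
  ring

theorem forall_tikhonovFunctional_le_iff (hT : T.IsPositive) (hlam : 0 ≤ lam) (g f : E) :
    (∀ f', tikhonovFunctional T lam g f ≤ tikhonovFunctional T lam g f') ↔
      T (f - g) + lam • f = 0 := by
  refine ⟨fun hmin => ?_, fun hgrad f' => ?_⟩
  · set grad := T (f - g) + lam • f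
    -- a quadratic in `t` with no constant term that stays nonnegative has discriminant `≤ 0`,
    -- so its linear coefficient vanishes
    have hquad : ∀ t : ℝ, 0 ≤ (inner ℝ (T grad) grad + lam * ‖grad‖ ^ 2) * (t * t)
        + 2 * ‖grad‖ ^ 2 * t + 0 := fun t => by
      have := hmin (f + t • grad)
      rw [tikhonovFunctional_add_smul hT.isSymmetric, real_inner_self_eq_norm_sq] at this
      linarith
    simpa [discrim] using discrim_le_zero hquad
  · have := tikhonovFunctional_add_smul (lam := lam) hT.isSymmetric g f (f' - f) 1
    rw [one_smul, add_sub_cancel, hgrad, inner_zero_left] at this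
    nlinarith [hT.inner_nonneg_left (f' - f), sq_nonneg ‖f' - f‖]

theorem LinearMap.IsPositive.eq_of_apply_add_smul_eq (hT : T.IsPositive) (hlam : 0 < lam)
    {u v : E} (h : T u + lam • u = T v + lam • v) : u = v := by
  have hd : T (u - v) + lam • (u - v) = 0 := by
    rw [map_sub, smul_sub, sub_add_sub_comm, h, sub_self]
  have hinner : inner ℝ (T (u - v)) (u - v) + lam * ‖u - v‖ ^ 2 = 0 := by
    rw [← real_inner_self_eq_norm_sq, ← real_inner_smul_left, ← inner_add_left, hd,
      inner_zero_left]
  have : ‖u - v‖ ^ 2 = 0 := by nlinarith [hT.inner_nonneg_left (u - v), sq_nonneg ‖u - v‖]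
  simpa [sub_eq_zero] using this

end Tikhonov

section KernelOperator

variable {X H : Type*} [MeasurableSpace X] {μ : Measure X}
  [NormedAddCommGroup H] [InnerProductSpace ℝ H] {K : X → H}

theorem MeasureTheory.MemLp.integrable_inner_smul (hK : MemLp K 2 μ) (u : H) :
    Integrable (fun x => inner ℝ (K x) u • K x) μ :=
  memLp_one_iff_integrable.mp (hK.smul (p := 2) (q := 2) (r := 1) (hK.inner_const u))

variable [CompleteSpace H]

noncomputable def kernelOperator (hK : MemLp K 2 μ) : H →ₗ[ℝ] H where
  toFun f := ∫ x, inner ℝ (K x) f • K x ∂μ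
  map_add' f f' := by
    simp only [inner_add_right, add_smul]
    exact integral_add (hK.integrable_inner_smul f) (hK.integrable_inner_smul f')
  map_smul' c f := by
    simp only [inner_smul_right, mul_smul, RingHom.id_apply]
    exact integral_smul c _

omit [CompleteSpace H] in
theorem kernelOperator_apply (hK : MemLp K 2 μ) (f : H) :
    kernelOperator hK f = ∫ x, inner ℝ (K x) f • K x ∂μ := rfl

theorem inner_kernelOperator (hK : MemLp K 2 μ) (f h : H) :
    inner ℝ h (kernelOperator hK f) = ∫ x, inner ℝ f (K x) * inner ℝ h (K x) ∂μ := by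
  rw [kernelOperator_apply, ← integral_inner (hK.integrable_inner_smul f)]
  simp only [real_inner_smul_right, real_inner_comm (K _) f]

theorem inner_kernelOperator_self (hK : MemLp K 2 μ) (f : H) :
    inner ℝ (kernelOperator hK f) f = ∫ x, inner ℝ f (K x) ^ 2 ∂μ := by
  rw [real_inner_comm, inner_kernelOperator]
  simp only [sq]

theorem kernelOperator_isPositive (hK : MemLp K 2 μ) : (kernelOperator hK).IsPositive := by
  refine (LinearMap.isPositive_iff _).mpr ⟨fun f h => ?_, fun f => ?_⟩
  · rw [real_inner_comm, inner_kernelOperator, inner_kernelOperator]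
    simp only [mul_comm]
  · rw [inner_kernelOperator_self]
    exact integral_nonneg fun x => sq_nonneg _

end KernelOperator

theorem stmt_8 {H X : Type*} [NormedAddCommGroup H] [InnerProductSpace ℝ H] [CompleteSpace H]
    [MeasurableSpace X] (μ : Measure X) (K : X → H)
    (hK : StronglyMeasurable K)
    (hK2 : Integrable (fun x => ‖K x‖ ^ 2) μ)
    (T : H → H)
    (hT : ∀ f : H, T f = ∫ x, (inner ℝ (K x) f : ℝ) • K x ∂μ)
    (lam : ℝ) (hlam : 0 < lam) (g : H)
    (J : H → ℝ)
    (hJ : ∀ f : H, J f = ∫ x, (inner ℝ (f - g) (K x) : ℝ) ^ 2 ∂μ + lam * ‖f‖ ^ 2)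
    (fhat : H) :
    ((∀ f : H, J fhat ≤ J f) ↔ T (fhat - g) + lam • fhat = 0) ∧
    ((∀ f : H, J fhat ≤ J f) →
      (T fhat + lam • fhat = T g ∧
        ∀ u : H, T u + lam • u = -(lam • g) → u = fhat - g)) := by
  have hKL2 : MemLp K 2 μ :=
    (memLp_two_iff_integrable_sq_norm hK.aestronglyMeasurable).mpr hK2
  have hpos := kernelOperator_isPositive hKL2
  obtain rfl : T = kernelOperator hKL2 := funext hT
  obtain rfl : J = tikhonovFunctional (kernelOperator hKL2) lam g :=
    funext fun f => by rw [hJ, tikhonovFunctional, inner_kernelOperator_self]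
  have hmin := forall_tikhonovFunctional_le_iff hpos hlam.le g fhat
  refine ⟨hmin, fun hfhat => ?_⟩
  have hgrad := hmin.mp hfhat
  rw [map_sub] at hgrad
  refine ⟨by linear_combination (norm := module) hgrad, fun u hu => ?_⟩
  refine hpos.eq_of_apply_add_smul_eq hlam ?_
  rw [hu, map_sub]
  linear_combination (norm := module) -hgrad
end

section
/- Let H be a real Hilbert space and K₁, …, K_N ∈ H, and define the evaluation operator P : H → ℝ^N by P f = (⟪f, K₁⟫, …, ⟪f, K_N⟫), where ℝ^N carries the Euclidean (ℓ²) norm. Then P is a bounded linear operator and its operator norm satisfies ‖P‖ ≤ (max_{j} Σ_{i=1}^N |G_{ij}|)^{1/2}, where G_{ij} = ⟪K_i, K_j⟫ is the Gram matrix. -/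
/-!
Schur test. With `a = P f`, one has `‖P f‖² = ⟪f, ∑ aᵢ Kᵢ⟫ ≤ ‖f‖ ‖∑ aᵢ Kᵢ‖`, i.e. `P` is bounded by
any bound on its formal adjoint `a ↦ ∑ aᵢ Kᵢ`. The latter satisfies `‖∑ aᵢ Kᵢ‖² = ∑ᵢⱼ aᵢ aⱼ Gᵢⱼ`, and
`2 |aᵢ aⱼ| ≤ aᵢ² + aⱼ²` bounds this quadratic form by the maximal absolute column sum of the symmetric
matrix `G` times `‖a‖²`.
-/

open Finset RealInnerProductSpace

theorem sum_sum_mul_mul_le_of_sum_abs_le {ι : Type*} [Fintype ι] (A : ι → ι → ℝ) (a : ι → ℝ)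
    {S : ℝ} (hrow : ∀ i, ∑ j, |A i j| ≤ S) (hcol : ∀ j, ∑ i, |A i j| ≤ S) :
    ∑ i, ∑ j, a i * a j * A i j ≤ S * ∑ i, a i ^ 2 := by
  have hterm : ∀ i j, a i * a j * A i j ≤ a i ^ 2 / 2 * |A i j| + a j ^ 2 / 2 * |A i j| := by
    intro i j
    have hamgm : |a i * a j| ≤ (a i ^ 2 + a j ^ 2) / 2 := by
      rw [abs_le']
      constructor <;> nlinarith [sq_nonneg (a i - a j), sq_nonneg (a i + a j)]
    calc a i * a j * A i j ≤ |a i * a j| * |A i j| := by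
          rw [← abs_mul]; exact le_abs_self _
      _ ≤ (a i ^ 2 + a j ^ 2) / 2 * |A i j| := by gcongr
      _ = _ := by ring
  have hrows : ∑ i, ∑ j, a i ^ 2 / 2 * |A i j| ≤ ∑ i, a i ^ 2 / 2 * S := by
    refine sum_le_sum fun i _ => ?_
    rw [← mul_sum]
    exact mul_le_mul_of_nonneg_left (hrow i) (by positivity)
  have hcols : ∑ i, ∑ j, a j ^ 2 / 2 * |A i j| ≤ ∑ j, a j ^ 2 / 2 * S := by
    rw [sum_comm]
    refine sum_le_sum fun j _ => ?_
    rw [← mul_sum]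
    exact mul_le_mul_of_nonneg_left (hcol j) (by positivity)
  calc ∑ i, ∑ j, a i * a j * A i j
      ≤ ∑ i, ∑ j, (a i ^ 2 / 2 * |A i j| + a j ^ 2 / 2 * |A i j|) :=
        sum_le_sum fun i _ => sum_le_sum fun j _ => hterm i j
    _ ≤ ∑ i, a i ^ 2 / 2 * S + ∑ j, a j ^ 2 / 2 * S := by
        simp only [sum_add_distrib]; exact add_le_add hrows hcols
    _ = S * ∑ i, a i ^ 2 := by rw [← sum_add_distrib, mul_sum]; congr 1 with i; ring

theorem norm_sum_smul_sq {ι H : Type*} [Fintype ι] [NormedAddCommGroup H] [InnerProductSpace ℝ H]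
    (a : ι → ℝ) (K : ι → H) :
    ‖∑ i, a i • K i‖ ^ 2 = ∑ i, ∑ j, a i * a j * ⟪K i, K j⟫ := by
  simp only [← real_inner_self_eq_norm_sq, sum_inner, inner_sum, real_inner_smul_left,
    real_inner_smul_right]
  congr 1 with i; congr 1 with j; rw [real_inner_comm]; ring

theorem norm_le_of_inner_eq_of_norm_le {E F : Type*} [NormedAddCommGroup E] [InnerProductSpace ℝ E]
    [NormedAddCommGroup F] [InnerProductSpace ℝ F] {P : E → F} {Q : F → E} {C : ℝ}
    (hPQ : ∀ f a, ⟪P f, a⟫ = ⟪f, Q a⟫) (hC : 0 ≤ C) (hQ : ∀ a, ‖Q a‖ ≤ C * ‖a‖) (f : E) :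
    ‖P f‖ ≤ C * ‖f‖ := by
  have hsq : ‖P f‖ ^ 2 ≤ C * ‖f‖ * ‖P f‖ :=
    calc ‖P f‖ ^ 2 = ⟪f, Q (P f)⟫ := by rw [← hPQ, real_inner_self_eq_norm_sq]
      _ ≤ ‖f‖ * ‖Q (P f)‖ := real_inner_le_norm _ _
      _ ≤ ‖f‖ * (C * ‖P f‖) := by gcongr; exact hQ _
      _ = C * ‖f‖ * ‖P f‖ := by ring
  rcases (norm_nonneg (P f)).eq_or_lt with h0 | hpos
  · rw [← h0]; positivity
  · exact le_of_mul_le_mul_right (by nlinarith) hpos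

section Evaluation

variable {ι H : Type*} [Fintype ι] [NormedAddCommGroup H] [InnerProductSpace ℝ H]

def evaluation (K : ι → H) : H →ₗ[ℝ] EuclideanSpace ℝ ι where
  toFun f := WithLp.toLp 2 fun i => ⟪f, K i⟫
  map_add' f g := by ext i; simp [inner_add_left]
  map_smul' c f := by ext i; simp [real_inner_smul_left]

theorem inner_evaluation (K : ι → H) (f : H) (a : EuclideanSpace ℝ ι) :
    ⟪evaluation K f, a⟫ = ⟪f, ∑ i, a i • K i⟫ := by
  simp [evaluation, PiLp.inner_apply, inner_sum, real_inner_smul_right, mul_comm]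

theorem norm_evaluation_le (K : ι → H) (f : H) :
    ‖evaluation K f‖ ≤ √(⨆ j, ∑ i, |⟪K i, K j⟫|) * ‖f‖ := by
  set S := ⨆ j, ∑ i, |⟪K i, K j⟫|
  have hcol : ∀ j, ∑ i, |⟪K i, K j⟫| ≤ S := le_ciSup (Set.finite_range _).bddAbove
  have hrow : ∀ i, ∑ j, |⟪K i, K j⟫| ≤ S := fun i => by
    simpa only [real_inner_comm (K i)] using hcol i
  refine norm_le_of_inner_eq_of_norm_le (inner_evaluation K) (Real.sqrt_nonneg S) (fun a => ?_) f
  rw [← Real.sqrt_sq (norm_nonneg _), ← Real.sqrt_sq (norm_nonneg a),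
    ← Real.sqrt_mul' _ (sq_nonneg _)]
  refine Real.sqrt_le_sqrt ?_
  rw [norm_sum_smul_sq, EuclideanSpace.real_norm_sq_eq]
  exact sum_sum_mul_mul_le_of_sum_abs_le _ _ hrow hcol

end Evaluation

theorem stmt_13_general {H : Type*} [NormedAddCommGroup H] [InnerProductSpace ℝ H]
    (N : ℕ) (K : Fin N → H) :
    ∃ P : H →L[ℝ] EuclideanSpace ℝ (Fin N),
      (∀ (f : H) (i : Fin N), P f i = (inner ℝ f (K i) : ℝ)) ∧
      ‖P‖ ≤ Real.sqrt (⨆ j : Fin N, ∑ i : Fin N, |(inner ℝ (K i) (K j) : ℝ)|) :=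
  ⟨(evaluation K).mkContinuous _ (norm_evaluation_le K), fun _ _ => rfl,
    LinearMap.mkContinuous_norm_le _ (Real.sqrt_nonneg _) _⟩

theorem stmt_13 {H : Type*} [NormedAddCommGroup H] [InnerProductSpace ℝ H] [CompleteSpace H]
    (N : ℕ) [NeZero N] (K : Fin N → H) :
    ∃ P : H →L[ℝ] EuclideanSpace ℝ (Fin N),
      (∀ (f : H) (i : Fin N), P f i = (inner ℝ f (K i) : ℝ)) ∧
      ‖P‖ ≤ Real.sqrt (⨆ j : Fin N, ∑ i : Fin N, |(inner ℝ (K i) (K j) : ℝ)|) :=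
  stmt_13_general N K
end

section
/- Let H be a real Hilbert space, N a positive integer, P : H → ℝ^N a bounded linear operator with adjoint P*, λ > 0, t > 0, f̄ ∈ H, and b ∈ ℝ^N. If f ∈ H is the minimizer of J(f) = (1/N)‖P f − (P f̄ + (1/t) b)‖² + λ‖f‖², then ‖f − f̄‖ ≤ ‖((1/N)P*P + λ·Id)⁻¹ (λ f̄)‖ + (1/(N t)) ‖((1/N)P*P + λ·Id)⁻¹ ∘ P*‖ · ‖b‖, where ‖·‖ on operators denotes the operator norm. -/
open ContinuousLinearMap
open scoped RealInnerProductSpace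

/-! The minimizer satisfies the normal equation `A f = (1/N) P* (P f̄ + b/t)` with
`A = (1/N) P* P + λ Id`, since the gradient of `J` vanishes at `f`. Subtracting `A f̄` gives
`A (f - f̄) = (1/(N t)) P* b - λ f̄`, and `A` is invertible because `⟪A x, x⟫ ≥ λ ‖x‖²`;
applying `A⁻¹` and the triangle inequality yields the bound. -/

section RegularizedLeastSquares

variable {E F : Type*} [NormedAddCommGroup E] [InnerProductSpace ℝ E] [CompleteSpace E]
  [NormedAddCommGroup F] [InnerProductSpace ℝ F] [CompleteSpace F]

theorem hasFDerivAt_regularizedLeastSquares (P : E →L[ℝ] F) (c lam : ℝ) (y : F) (f : E) :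
    HasFDerivAt (fun g => c * ‖P g - y‖ ^ 2 + lam * ‖g‖ ^ 2)
      ((2 : ℝ) • innerSL ℝ (c • adjoint P (P f - y) + lam • f)) f := by
  have hres : HasFDerivAt (fun g => P g - y) P f := P.hasFDerivAt.sub_const y
  refine ((hres.norm_sq.const_mul c).add
    ((hasFDerivAt_id f).norm_sq.const_mul lam)).congr_fderiv ?_
  ext h
  simp only [map_sub, sub_comp, id_eq, comp_id, add_apply, smul_apply, sub_apply, comp_apply,
    coe_innerSL_apply, nsmul_eq_mul, Nat.cast_ofNat, smul_eq_mul, map_add, map_smul, smul_add,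
    adjoint_inner_left]
  ring

theorem smul_adjoint_comp_add_smul_one_apply_eq_of_isLocalMin {P : E →L[ℝ] F} {c lam : ℝ} {y : F}
    {f : E} (hmin : IsLocalMin (fun g => c * ‖P g - y‖ ^ 2 + lam * ‖g‖ ^ 2) f) :
    (c • (adjoint P).comp P + lam • 1) f = c • adjoint P y := by
  have hgrad := hmin.hasFDerivAt_eq_zero (hasFDerivAt_regularizedLeastSquares P c lam y f)
  have hzero : c • adjoint P (P f - y) + lam • f = 0 :=
    innerSL_inj.mp (((smul_eq_zero.mp hgrad).resolve_left two_ne_zero).trans (map_zero _).symm)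
  rw [map_sub] at hzero
  simp only [add_apply, smul_apply, comp_apply, one_apply_eq_self]
  linear_combination (norm := module) hzero

theorem isUnit_smul_adjoint_comp_add_smul_one (P : E →L[ℝ] F) {c lam : ℝ} (hc : 0 ≤ c)
    (hlam : 0 < lam) : IsUnit (c • (adjoint P).comp P + lam • (1 : E →L[ℝ] E)) := by
  refine isUnit_of_forall_le_norm_inner_map _ (Real.toNNReal_pos.mpr hlam) fun x => ?_
  have hinner : ⟪(c • (adjoint P).comp P + lam • (1 : E →L[ℝ] E)) x, x⟫
      = c * ‖P x‖ ^ 2 + lam * ‖x‖ ^ 2 := by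
    simp [inner_add_left, real_inner_smul_left, adjoint_inner_left]
  rw [hinner, Real.norm_of_nonneg (by positivity), Real.coe_toNNReal _ hlam.le]
  nlinarith [mul_nonneg hc (sq_nonneg ‖P x‖)]

end RegularizedLeastSquares

theorem stmt_15_general {H : Type*} [NormedAddCommGroup H] [InnerProductSpace ℝ H] [CompleteSpace H]
    (N : ℕ)
    (P : H →L[ℝ] EuclideanSpace ℝ (Fin N))
    (lam : ℝ) (hlam : 0 < lam) (t : ℝ) (ht : 0 < t)
    (fbar : H) (b : EuclideanSpace ℝ (Fin N))
    (J : H → ℝ)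
    (hJ : ∀ f : H, J f = (1 / (N : ℝ)) * ‖P f - (P fbar + (1 / t) • b)‖ ^ 2 + lam * ‖f‖ ^ 2)
    (f : H) (hmin : ∀ g : H, J f ≤ J g) :
    ‖f - fbar‖ ≤
      ‖Ring.inverse ((1 / (N : ℝ)) • ((ContinuousLinearMap.adjoint P).comp P)
          + lam • (1 : H →L[ℝ] H)) (lam • fbar)‖
      + (1 / ((N : ℝ) * t)) *
        ‖(Ring.inverse ((1 / (N : ℝ)) • ((ContinuousLinearMap.adjoint P).comp P)
            + lam • (1 : H →L[ℝ] H))).comp (ContinuousLinearMap.adjoint P)‖ * ‖b‖ := by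
  set A := (1 / (N : ℝ)) • (adjoint P).comp P + lam • (1 : H →L[ℝ] H)
  have hlocalMin : IsLocalMin
      (fun g => (1 / (N : ℝ)) * ‖P g - (P fbar + (1 / t) • b)‖ ^ 2 + lam * ‖g‖ ^ 2) f :=
    Filter.Eventually.of_forall fun g => by simpa only [hJ] using hmin g
  have hnormal := smul_adjoint_comp_add_smul_one_apply_eq_of_isLocalMin hlocalMin
  have hshift : A (f - fbar) = (1 / ((N : ℝ) * t)) • adjoint P b - lam • fbar := by
    rw [map_sub, hnormal]
    simp only [A, add_apply, smul_apply, comp_apply, one_apply_eq_self, map_add, map_smul]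
    rw [← one_div_mul_one_div]
    module
  have hsolve : f - fbar
      = Ring.inverse A ((1 / ((N : ℝ) * t)) • adjoint P b) - Ring.inverse A (lam • fbar) := by
    rw [← map_sub, ← hshift, ← mul_apply_eq_comp,
      Ring.inverse_mul_cancel A (isUnit_smul_adjoint_comp_add_smul_one P (by positivity) hlam),
      one_apply_eq_self]
  calc ‖f - fbar‖
      ≤ ‖Ring.inverse A (lam • fbar)‖ + ‖Ring.inverse A ((1 / ((N : ℝ) * t)) • adjoint P b)‖ := by
        rw [hsolve, add_comm]
        exact norm_sub_le _ _
    _ ≤ _ := by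
        rw [(Ring.inverse A).map_smul (1 / ((N : ℝ) * t)), norm_smul,
          Real.norm_of_nonneg (by positivity), mul_assoc]
        gcongr
        exact ((Ring.inverse A).comp (adjoint P)).le_opNorm b

theorem stmt_15 {H : Type*} [NormedAddCommGroup H] [InnerProductSpace ℝ H] [CompleteSpace H]
    (N : ℕ) (hN : 0 < N)
    (P : H →L[ℝ] EuclideanSpace ℝ (Fin N))
    (lam : ℝ) (hlam : 0 < lam) (t : ℝ) (ht : 0 < t)
    (fbar : H) (b : EuclideanSpace ℝ (Fin N))
    (J : H → ℝ)
    (hJ : ∀ f : H, J f = (1 / (N : ℝ)) * ‖P f - (P fbar + (1 / t) • b)‖ ^ 2 + lam * ‖f‖ ^ 2)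
    (f : H) (hmin : ∀ g : H, J f ≤ J g) :
    ‖f - fbar‖ ≤
      ‖Ring.inverse ((1 / (N : ℝ)) • ((ContinuousLinearMap.adjoint P).comp P)
          + lam • (1 : H →L[ℝ] H)) (lam • fbar)‖
      + (1 / ((N : ℝ) * t)) *
        ‖(Ring.inverse ((1 / (N : ℝ)) • ((ContinuousLinearMap.adjoint P).comp P)
            + lam • (1 : H →L[ℝ] H))).comp (ContinuousLinearMap.adjoint P)‖ * ‖b‖ :=
  stmt_15_general N P lam hlam t ht fbar b J hJ f hmin
end

section
/- Let H and E be real Hilbert spaces, N a positive integer (regarded as a positive real), P : H → E a bounded linear operator with adjoint P*, and λ > 0. Then the operator norm of ((1/N)P*P + λ·Id)⁻¹ ∘ P* : E → H satisfies ‖((1/N)P*P + λ·Id)⁻¹ ∘ P*‖ ≤ √N / (2√λ). -/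
open RealInnerProductSpace


theorem stmt_16 {H E : Type*} [NormedAddCommGroup H] [InnerProductSpace ℝ H] [CompleteSpace H]
    [NormedAddCommGroup E] [InnerProductSpace ℝ E] [CompleteSpace E]
    (N : ℕ) (hN : 0 < N)
    (P : H →L[ℝ] E) (lam : ℝ) (hlam : 0 < lam) :
    ‖(Ring.inverse ((1 / (N : ℝ)) • ((ContinuousLinearMap.adjoint P).comp P)
        + lam • (1 : H →L[ℝ] H))).comp (ContinuousLinearMap.adjoint P)‖
      ≤ Real.sqrt N / (2 * Real.sqrt lam) := by
  set B := (1 / (N : ℝ)) • ((ContinuousLinearMap.adjoint P).comp P)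
      + lam • (1 : H →L[ℝ] H) with hBdef
  have hNpos : (0 : ℝ) < (N : ℝ) := by exact_mod_cast hN
  have hr : (0 : ℝ) < Real.sqrt N := Real.sqrt_pos.mpr hNpos
  have hs : (0 : ℝ) < Real.sqrt lam := Real.sqrt_pos.mpr hlam
  have hrsq : Real.sqrt N ^ 2 = (N : ℝ) := Real.sq_sqrt hNpos.le
  have hssq : Real.sqrt lam ^ 2 = lam := Real.sq_sqrt hlam.le
  by_cases hu : IsUnit B
  · apply ContinuousLinearMap.opNorm_le_bound _ (by positivity)
    intro y
    set x := (Ring.inverse B) ((ContinuousLinearMap.adjoint P) y) with hxdef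
    have hcomp : ((Ring.inverse B).comp (ContinuousLinearMap.adjoint P)) y = x := rfl
    rw [hcomp]
    have hBx : B x = (ContinuousLinearMap.adjoint P) y := by
      have h1 : B * Ring.inverse B = 1 := Ring.mul_inverse_cancel B hu
      calc B x = (B * Ring.inverse B) ((ContinuousLinearMap.adjoint P) y) := rfl
        _ = (ContinuousLinearMap.adjoint P) y := by rw [h1]; rfl
    have key : (1 / (N : ℝ)) * ‖P x‖ ^ 2 + lam * ‖x‖ ^ 2 = ⟪y, P x⟫ := by
      have h2 : ⟪B x, x⟫ = ⟪(ContinuousLinearMap.adjoint P) y, x⟫ := by rw [hBx]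
      have h3 : ⟪(ContinuousLinearMap.adjoint P) y, x⟫ = ⟪y, P x⟫ := by
        rw [ContinuousLinearMap.adjoint_inner_left]
      have h4 : ⟪B x, x⟫ = (1 / (N : ℝ)) * ‖P x‖ ^ 2 + lam * ‖x‖ ^ 2 := by
        have hBx' : B x = (1 / (N : ℝ)) • (ContinuousLinearMap.adjoint P) (P x) + lam • x := by
          simp [hBdef]
        rw [hBx', inner_add_left, real_inner_smul_left, real_inner_smul_left,
          ContinuousLinearMap.adjoint_inner_left, real_inner_self_eq_norm_sq,
          real_inner_self_eq_norm_sq]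
      rw [← h4, h2, h3]
    have hineq : (1 / (N : ℝ)) * ‖P x‖ ^ 2 + lam * ‖x‖ ^ 2 ≤ ‖y‖ * ‖P x‖ := by
      rw [key]
      exact real_inner_le_norm y (P x)
    by_cases ha : ‖P x‖ = 0
    · rw [ha] at hineq
      have hx2 : ‖x‖ ^ 2 = 0 := by nlinarith [sq_nonneg ‖x‖]
      have hx0 : ‖x‖ = 0 := by
        have := pow_eq_zero_iff (n := 2) (by norm_num) |>.mp hx2
        exact this
      rw [hx0]
      positivity
    · have ha' : 0 < ‖P x‖ := lt_of_le_of_ne (norm_nonneg _) (Ne.symm ha)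
      rw [div_mul_eq_mul_div, le_div_iff₀ (by positivity)]
      have hineq' : ‖P x‖ ^ 2 + (N : ℝ) * lam * ‖x‖ ^ 2 ≤ (N : ℝ) * (‖y‖ * ‖P x‖) := by
        have := mul_le_mul_of_nonneg_left hineq hNpos.le
        field_simp at this ⊢
        nlinarith
      have hineq2 : ‖P x‖ ^ 2 + (Real.sqrt N) ^ 2 * (Real.sqrt lam) ^ 2 * ‖x‖ ^ 2
          ≤ (Real.sqrt N) ^ 2 * (‖y‖ * ‖P x‖) := by
        rw [hrsq, hssq]; exact hineq'
      nlinarith [sq_nonneg (‖P x‖ - Real.sqrt N * Real.sqrt lam * ‖x‖),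
        mul_pos hr ha', norm_nonneg x, norm_nonneg y,
        mul_pos (mul_pos hr hs) ha', mul_pos hs ha']
  · rw [Ring.inverse_non_unit B hu]
    simp only [ContinuousLinearMap.zero_comp, norm_zero]
    positivity
end
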